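/- Let n be odd and let v_1,…,v_n ∈ ℝ³ be the edge vectors of a generic closed n-gon (so v_1+⋯+v_n = 0 and Δ_i ≠ 0 for all i). Then the polygon is regular (i.e. a support system exists) if and only if Δ_1·Δ_2·…·Δ_n > 0. -/

import Mathlib

/-!
Forward: if `u` is a support system, then `Δ (i + 1)` is the triple product of
`u i ⨯₃ u (i + 1)`, `u (i + 1) ⨯₃ u (i + 2)`, `u (i + 2) ⨯₃ u (i + 3)`, which equals
`D i * D (i + 1)` for `D i = ⟨u i, [u (i + 1), u (i + 2)]⟩`; hence `∏ Δ = (∏ D) ^ 2`.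

Backward: look for `u i = t i • [v i, v (i + 1)]`. Since `[[a, b], [b, c]] = ⟨a, [b, c]⟩ • b`, this
is a support system as soon as `t i * t (i + 1) = (Δ i)⁻¹` for all `i`. On a cycle of odd length
`n`, the system `t i * t (i + 1) = c i` is solvable when `∏ c > 0`: propagating
`t (k + 1) = c k / t k` from `t 0 = x` gives `t n = q / x` with `q` of the sign of `∏ c`, so
`x = √q` closes the cycle.
-/

open Matrix Finset

section CrossProduct

variable {R : Type*} [CommRing R]

theorem cross_cross_cross_eq_smul (a b c : Fin 3 → R) :
    a ⨯₃ b ⨯₃ (b ⨯₃ c) = (a ⬝ᵥ b ⨯₃ c) • b := by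
  rw [cross_cross_eq_smul_sub_smul, dot_self_cross, zero_smul, sub_zero]

theorem cross_dot_cross_cross_cross (a b c d : Fin 3 → R) :
    a ⨯₃ b ⬝ᵥ (b ⨯₃ c ⨯₃ (c ⨯₃ d)) = (a ⬝ᵥ b ⨯₃ c) * (b ⬝ᵥ c ⨯₃ d) := by
  rw [cross_cross_cross_eq_smul, dotProduct_smul, smul_eq_mul, dotProduct_comm (a ⨯₃ b),
    ← triple_product_permutation b c a, ← triple_product_permutation a b c, mul_comm]

theorem smul_cross_smul (r s : R) (a b : Fin 3 → R) :
    (r • a) ⨯₃ (s • b) = (r * s) • (a ⨯₃ b) := by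
  rw [LinearMap.map_smul₂, map_smul, smul_smul]

end CrossProduct

theorem Fin.apply_val_add_one_of_apply_eq {α : Type*} {n : ℕ} [NeZero n] {f : ℕ → α}
    (hf : f n = f 0) (i : Fin n) : f ((i + 1 : Fin n) : ℕ) = f (i + 1) := by
  rw [Fin.val_add, Fin.val_one', Nat.add_mod_mod]
  by_cases h : (i : ℕ) + 1 < n
  · rw [Nat.mod_eq_of_lt h]
  · rw [show (i : ℕ) + 1 = n by omega, Nat.mod_self, hf]

open Fin.CommRing in
theorem Fin.add_one_add_one {n : ℕ} [NeZero n] (i : Fin n) : i + 1 + 1 = i + 2 := by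
  ring

theorem prod_det_eq_sq_of_cross_eq {R : Type*} [CommRing R] {n : ℕ} [NeZero n]
    (u v : Fin n → Fin 3 → R) (hu : ∀ i, u i ⨯₃ u (i + 1) = v (i + 1)) :
    ∏ i, v i ⬝ᵥ v (i + 1) ⨯₃ v (i + 2) = (∏ i, u i ⬝ᵥ u (i + 1) ⨯₃ u (i + 2)) ^ 2 := by
  set D : Fin n → R := fun i => u i ⬝ᵥ u (i + 1) ⨯₃ u (i + 2)
  have hv : ∀ i, v (i + 1) ⬝ᵥ v (i + 1 + 1) ⨯₃ v (i + 1 + 2) = D i * D (i + 1) := by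
    intro i
    rw [← hu, ← hu, add_right_comm i 1 2, ← hu, Fin.add_one_add_one, cross_dot_cross_cross_cross]
    simp only [D, Fin.add_one_add_one, add_right_comm i 2 1]
  calc ∏ i, v i ⬝ᵥ v (i + 1) ⨯₃ v (i + 2)
      = ∏ i, v (i + 1) ⬝ᵥ v (i + 1 + 1) ⨯₃ v (i + 1 + 2) :=
        (Equiv.prod_comp (Equiv.addRight 1) _).symm
    _ = (∏ i, D i) * ∏ i, D (i + 1) := by simp only [hv, prod_mul_distrib]
    _ = (∏ i, D i) ^ 2 := by
        rw [Fintype.prod_equiv (Equiv.addRight 1) (fun i => D (i + 1)) D fun _ => rfl, sq]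

section QuotientChain

variable {K : Type*} [Field K]

def quotientChain (c : ℕ → K) (x : K) : ℕ → K
  | 0 => x
  | k + 1 => c k / quotientChain c x k

variable (c : ℕ → K) (x : K)

@[simp] theorem quotientChain_zero : quotientChain c x 0 = x := rfl

theorem quotientChain_succ (k : ℕ) :
    quotientChain c x (k + 1) = c k / quotientChain c x k := rfl

theorem quotientChain_mul_succ {k : ℕ} (hk : quotientChain c x k ≠ 0) :
    quotientChain c x k * quotientChain c x (k + 1) = c k :=
  mul_div_cancel₀ _ hk

theorem quotientChain_eq_zpow_mul (k : ℕ) :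
    quotientChain c x k = x ^ ((-1 : ℤ) ^ k) * quotientChain c 1 k := by
  induction k with
  | zero => simp
  | succ k ih =>
    rw [quotientChain_succ, quotientChain_succ, ih, pow_succ, mul_neg_one, _root_.zpow_neg]
    ring

theorem quotientChain_one_mul_prod_pos [LinearOrder K] [IsStrictOrderedRing K] {k : ℕ}
    (hc : ∀ j < k, c j ≠ 0) : 0 < quotientChain c 1 k * ∏ j ∈ range k, c j := by
  induction k with
  | zero => simp
  | succ k ih =>
    have hpos := ih fun j hj => hc j (by omega)
    have hk : quotientChain c 1 k ≠ 0 := left_ne_zero_of_mul hpos.ne'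
    have : quotientChain c 1 (k + 1) * ∏ j ∈ range (k + 1), c j =
        (c k / quotientChain c 1 k) ^ 2 * (quotientChain c 1 k * ∏ j ∈ range k, c j) := by
      rw [quotientChain_succ, prod_range_succ]; field_simp
    rw [this]
    exact mul_pos (pow_two_pos_of_ne_zero (div_ne_zero (hc k k.lt_succ_self) hk)) hpos

end QuotientChain

open Fin.NatCast in
theorem exists_mul_add_one_eq_of_odd {n : ℕ} [NeZero n] (hn : Odd n) {c : Fin n → ℝ}
    (hc : 0 < ∏ i, c i) : ∃ t : Fin n → ℝ, ∀ i, t i * t (i + 1) = c i := by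
  set c' : ℕ → ℝ := fun k => c k
  have hc' : ∀ k, c' k ≠ 0 := fun k => prod_ne_zero_iff.mp hc.ne' _ (mem_univ _)
  have hprod : ∏ j ∈ range n, c' j = ∏ i, c i := by
    rw [← Fin.prod_univ_eq_prod_range]; simp only [c', Fin.cast_val_eq_self]
  have hq : 0 < quotientChain c' 1 n :=
    pos_of_mul_pos_left (quotientChain_one_mul_prod_pos c' fun j _ => hc' j) (hprod ▸ hc).le
  set x := √(quotientChain c' 1 n)
  have hx : x ≠ 0 := (Real.sqrt_pos.mpr hq).ne'
  have hperiodic : quotientChain c' x n = quotientChain c' x 0 := by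
    rw [quotientChain_eq_zpow_mul, hn.neg_one_pow, _root_.zpow_neg_one, quotientChain_zero,
      inv_mul_eq_div, Real.div_sqrt]
  have hne : ∀ k, quotientChain c' x k ≠ 0 := fun k => by
    rw [quotientChain_eq_zpow_mul]
    exact mul_ne_zero (zpow_ne_zero _ hx)
      (left_ne_zero_of_mul (quotientChain_one_mul_prod_pos c' (k := k) fun j _ => hc' j).ne')
  refine ⟨fun i => quotientChain c' x i, fun i => ?_⟩
  dsimp only
  rw [Fin.apply_val_add_one_of_apply_eq hperiodic, quotientChain_mul_succ _ _ (hne i)]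
  simp only [c', Fin.cast_val_eq_self]

theorem odd_polygon_regular_iff_general (n : ℕ) (hn : Odd n) [NeZero n]
    (v : Fin n → Fin 3 → ℝ)
    (Δ : Fin n → ℝ)
    (hΔ : ∀ i, Δ i = v i ⬝ᵥ (v (i + 1) ⨯₃ v (i + 2)))
    (hgen : ∀ i, Δ i ≠ 0) :
    (∃ u : Fin n → Fin 3 → ℝ, ∀ i, u i ⨯₃ u (i + 1) = v (i + 1)) ↔ 0 < ∏ i, Δ i := by
  have hprod : ∏ i, Δ i ≠ 0 := prod_ne_zero_iff.mpr fun i _ => hgen i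
  constructor
  · rintro ⟨u, hu⟩
    simp only [hΔ, prod_det_eq_sq_of_cross_eq u v hu] at hprod ⊢
    exact pow_two_pos_of_ne_zero (ne_zero_pow two_ne_zero hprod)
  · intro hpos
    obtain ⟨t, ht⟩ := exists_mul_add_one_eq_of_odd hn (c := fun i => (Δ i)⁻¹)
      (by rw [prod_inv_distrib]; exact inv_pos.mpr hpos)
    refine ⟨fun i => t i • v i ⨯₃ v (i + 1), fun i => ?_⟩
    rw [smul_cross_smul, ht, Fin.add_one_add_one, cross_cross_cross_eq_smul, ← hΔ,
      smul_smul, inv_mul_cancel₀ (hgen i), one_smul]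

/-- Let `n` be odd and `v 0, …, v (n-1)` the edge vectors of a generic
closed `n`-gon (sum zero, all determinants `Δ i = ⟨v i, [v (i+1), v (i+2)]⟩` nonzero,
indices mod `n`).  Then a support system exists iff `Δ_1·Δ_2·…·Δ_n > 0`. -/
theorem odd_polygon_regular_iff (n : ℕ) (hn : Odd n) [NeZero n]
    (v : Fin n → Fin 3 → ℝ)
    (hclosed : ∑ i, v i = 0)
    (Δ : Fin n → ℝ)
    (hΔ : ∀ i, Δ i = v i ⬝ᵥ (v (i + 1) ⨯₃ v (i + 2)))
    (hgen : ∀ i, Δ i ≠ 0) :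
    (∃ u : Fin n → Fin 3 → ℝ, ∀ i, u i ⨯₃ u (i + 1) = v (i + 1)) ↔ 0 < ∏ i, Δ i :=
  odd_polygon_regular_iff_general n hn v Δ hΔ hgen
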